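/- arXiv:2303.00799 — 2 statements merged into one kernel-verified Lean document; each statement's English description precedes it below -/
import Mathlib

section
/- For the discounted two-action Lagrangian MDP, the Q-value of the active action Q_λ(s, 1) = R(s) − λc + γ·Σ_{s'} P¹(s,s')·V_λ(s') and of the passive action Q_λ(s, 0) = R(s) + γ·Σ_{s'} P⁰(s,s')·V_λ(s') satisfy: the difference Q_λ(s,1) − Q_λ(s,0) is continuous in λ, tends to −∞ as λ → +∞, and hence if Q_0(s,1) − Q_0(s,0) ≥ 0 there exists λ* ≥ 0 with Q_{λ*}(s,1) = Q_{λ*}(s,0). -/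
open Finset Filter

section aux

variable {S : Type*} [Fintype S] [Nonempty S]
    (R : S → ℝ) (P0 P1 : S → S → ℝ)
    (γ : ℝ) (c : ℝ) (V : ℝ → S → ℝ)

lemma qdiff_lip
    (hP0 : ∀ s s', 0 ≤ P0 s s') (hP0sum : ∀ s, ∑ s', P0 s s' = 1)
    (hP1 : ∀ s s', 0 ≤ P1 s s') (hP1sum : ∀ s, ∑ s', P1 s s' = 1)
    (hγ0 : 0 ≤ γ) (hγ1 : γ < 1) (hc : 0 < c)
    (hV : ∀ lam s, V lam s =
      max (R s + γ * ∑ s', P0 s s' * V lam s')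
          (R s - lam * c + γ * ∑ s', P1 s s' * V lam s'))
    (lam mu : ℝ) (s : S) :
    |V lam s - V mu s| ≤ c * |lam - mu| / (1 - γ) := by
  obtain ⟨s0, -, hs0⟩ := Finset.exists_max_image Finset.univ
      (fun t => |V lam t - V mu t|) ⟨Classical.arbitrary S, mem_univ _⟩
  set M := |V lam s0 - V mu s0| with hMdef
  have hMax : ∀ t, |V lam t - V mu t| ≤ M := fun t => hs0 t (mem_univ t)
  have hM0 : 0 ≤ M := abs_nonneg _
  have sumb : ∀ (P : S → S → ℝ), (∀ s s', 0 ≤ P s s') → (∀ s, ∑ s', P s s' = 1) →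
      ∀ t : S, |(∑ s', P t s' * V lam s') - (∑ s', P t s' * V mu s')| ≤ M := by
    intro P hP hPs t
    rw [← Finset.sum_sub_distrib]
    calc |∑ s', (P t s' * V lam s' - P t s' * V mu s')|
        ≤ ∑ s', |P t s' * V lam s' - P t s' * V mu s'| :=
          Finset.abs_sum_le_sum_abs _ _
      _ ≤ ∑ s', P t s' * M := by
          refine Finset.sum_le_sum fun i _ => ?_
          rw [← mul_sub, abs_mul, abs_of_nonneg (hP t i)]
          exact mul_le_mul_of_nonneg_left (hMax i) (hP t i)
      _ = M := by rw [← Finset.sum_mul, hPs t, one_mul]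
  have hkey : M ≤ c * |lam - mu| + γ * M := by
    have h1 := abs_max_sub_max_le_max
      (R s0 + γ * ∑ s', P0 s0 s' * V lam s')
      (R s0 - lam * c + γ * ∑ s', P1 s0 s' * V lam s')
      (R s0 + γ * ∑ s', P0 s0 s' * V mu s')
      (R s0 - mu * c + γ * ∑ s', P1 s0 s' * V mu s')
    rw [← hV lam s0, ← hV mu s0] at h1
    refine le_trans h1 (max_le ?_ ?_)
    · have heq : (R s0 + γ * ∑ s', P0 s0 s' * V lam s') -
          (R s0 + γ * ∑ s', P0 s0 s' * V mu s') =
          γ * ((∑ s', P0 s0 s' * V lam s') - (∑ s', P0 s0 s' * V mu s')) := by ring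
      rw [heq, abs_mul, abs_of_nonneg hγ0]
      have := sumb P0 hP0 hP0sum s0
      nlinarith [mul_nonneg (abs_nonneg (lam - mu)) hc.le]
    · have heq : (R s0 - lam * c + γ * ∑ s', P1 s0 s' * V lam s') -
          (R s0 - mu * c + γ * ∑ s', P1 s0 s' * V mu s') =
          (mu - lam) * c +
            γ * ((∑ s', P1 s0 s' * V lam s') - (∑ s', P1 s0 s' * V mu s')) := by ring
      rw [heq]
      have h2 := sumb P1 hP1 hP1sum s0
      calc |(mu - lam) * c + γ * ((∑ s', P1 s0 s' * V lam s') - (∑ s', P1 s0 s' * V mu s'))|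
          ≤ |(mu - lam) * c| +
            |γ * ((∑ s', P1 s0 s' * V lam s') - (∑ s', P1 s0 s' * V mu s'))| :=
            abs_add_le _ _
        _ ≤ c * |lam - mu| + γ * M := by
            rw [abs_mul, abs_mul, abs_of_nonneg hγ0, abs_of_pos hc, abs_sub_comm mu lam]
            have := mul_le_mul_of_nonneg_left h2 hγ0
            linarith
  have hγ' : 0 < 1 - γ := by linarith
  have hMle : M ≤ c * |lam - mu| / (1 - γ) := by
    rw [le_div_iff₀ hγ']
    nlinarith
  exact le_trans (hMax s) hMle

lemma V_cont
    (hP0 : ∀ s s', 0 ≤ P0 s s') (hP0sum : ∀ s, ∑ s', P0 s s' = 1)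
    (hP1 : ∀ s s', 0 ≤ P1 s s') (hP1sum : ∀ s, ∑ s', P1 s s' = 1)
    (hγ0 : 0 ≤ γ) (hγ1 : γ < 1) (hc : 0 < c)
    (hV : ∀ lam s, V lam s =
      max (R s + γ * ∑ s', P0 s s' * V lam s')
          (R s - lam * c + γ * ∑ s', P1 s s' * V lam s'))
    (s : S) : Continuous (fun lam => V lam s) := by
  have hK : 0 ≤ c / (1 - γ) := div_nonneg hc.le (by linarith)
  refine (LipschitzWith.of_dist_le_mul (K := ⟨c / (1 - γ), hK⟩)
    (f := fun lam => V lam s) ?_).continuous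
  intro lam mu
  simp only [Real.dist_eq]
  have := qdiff_lip R P0 P1 γ c V hP0 hP0sum hP1 hP1sum hγ0 hγ1 hc hV lam mu s
  calc |V lam s - V mu s| ≤ c * |lam - mu| / (1 - γ) := this
    _ = (c / (1 - γ)) * |lam - mu| := by ring

lemma V_le
    (hP0 : ∀ s s', 0 ≤ P0 s s') (hP0sum : ∀ s, ∑ s', P0 s s' = 1)
    (hP1 : ∀ s s', 0 ≤ P1 s s') (hP1sum : ∀ s, ∑ s', P1 s s' = 1)
    (hγ0 : 0 ≤ γ) (hγ1 : γ < 1) (hc : 0 < c)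
    (hV : ∀ lam s, V lam s =
      max (R s + γ * ∑ s', P0 s s' * V lam s')
          (R s - lam * c + γ * ∑ s', P1 s s' * V lam s'))
    (lam : ℝ) (hlam : 0 ≤ lam) (s : S) :
    V lam s ≤ (Finset.univ.sup' ⟨Classical.arbitrary S, mem_univ _⟩ R) / (1 - γ) := by
  set Rmax := Finset.univ.sup' ⟨Classical.arbitrary S, mem_univ _⟩ R with hR
  obtain ⟨s0, -, hs0⟩ := Finset.exists_max_image Finset.univ
      (fun t => V lam t) ⟨Classical.arbitrary S, mem_univ _⟩
  have hmax : ∀ t, V lam t ≤ V lam s0 := fun t => hs0 t (mem_univ t)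
  have hγ' : 0 < 1 - γ := by linarith
  have sumb : ∀ (P : S → S → ℝ), (∀ s s', 0 ≤ P s s') → (∀ s, ∑ s', P s s' = 1) →
      (∑ s', P s0 s' * V lam s') ≤ V lam s0 := by
    intro P hP hPs
    calc (∑ s', P s0 s' * V lam s') ≤ ∑ s', P s0 s' * V lam s0 :=
          Finset.sum_le_sum fun i _ => mul_le_mul_of_nonneg_left (hmax i) (hP s0 i)
      _ = V lam s0 := by rw [← Finset.sum_mul, hPs s0, one_mul]
  have hRs0 : R s0 ≤ Rmax := Finset.le_sup' R (mem_univ s0)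
  have h0 : V lam s0 ≤ R s0 + γ * V lam s0 := by
    conv_lhs => rw [hV lam s0]
    refine max_le ?_ ?_
    · have := mul_le_mul_of_nonneg_left (sumb P0 hP0 hP0sum) hγ0
      linarith
    · have := mul_le_mul_of_nonneg_left (sumb P1 hP1 hP1sum) hγ0
      nlinarith
  have hs0le : V lam s0 ≤ Rmax / (1 - γ) := by
    rw [le_div_iff₀ hγ']
    nlinarith
  exact le_trans (hmax s) hs0le

lemma V_ge
    (hP0 : ∀ s s', 0 ≤ P0 s s') (hP0sum : ∀ s, ∑ s', P0 s s' = 1)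
    (hγ0 : 0 ≤ γ) (hγ1 : γ < 1)
    (hV : ∀ lam s, V lam s =
      max (R s + γ * ∑ s', P0 s s' * V lam s')
          (R s - lam * c + γ * ∑ s', P1 s s' * V lam s'))
    (lam : ℝ) (s : S) :
    (Finset.univ.inf' ⟨Classical.arbitrary S, mem_univ _⟩ R) / (1 - γ) ≤ V lam s := by
  set Rmin := Finset.univ.inf' ⟨Classical.arbitrary S, mem_univ _⟩ R with hR
  obtain ⟨s0, -, hs0⟩ := Finset.exists_min_image Finset.univ
      (fun t => V lam t) ⟨Classical.arbitrary S, mem_univ _⟩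
  have hmin : ∀ t, V lam s0 ≤ V lam t := fun t => hs0 t (mem_univ t)
  have hγ' : 0 < 1 - γ := by linarith
  have sumb : (∑ s', P0 s0 s' * V lam s') ≥ V lam s0 := by
    calc (∑ s', P0 s0 s' * V lam s') ≥ ∑ s', P0 s0 s' * V lam s0 :=
          Finset.sum_le_sum fun i _ => mul_le_mul_of_nonneg_left (hmin i) (hP0 s0 i)
      _ = V lam s0 := by rw [← Finset.sum_mul, hP0sum s0, one_mul]
  have hRs0 : Rmin ≤ R s0 := Finset.inf'_le R (mem_univ s0)
  have h0 : R s0 + γ * V lam s0 ≤ V lam s0 := by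
    have h1 : R s0 + γ * ∑ s', P0 s0 s' * V lam s' ≤ V lam s0 := by
      rw [hV lam s0]; exact le_max_left _ _
    have := mul_le_mul_of_nonneg_left sumb hγ0
    linarith
  have : Rmin / (1 - γ) ≤ V lam s0 := by
    rw [div_le_iff₀ hγ']
    nlinarith
  exact le_trans this (hmin s)

end aux

theorem q_difference_continuous_tendsto_and_root
    (S : Type*) [Fintype S] [Nonempty S]
    (R : S → ℝ) (P0 P1 : S → S → ℝ)
    (hP0 : ∀ s s', 0 ≤ P0 s s') (hP0sum : ∀ s, ∑ s', P0 s s' = 1)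
    (hP1 : ∀ s s', 0 ≤ P1 s s') (hP1sum : ∀ s, ∑ s', P1 s s' = 1)
    (γ : ℝ) (hγ0 : 0 ≤ γ) (hγ1 : γ < 1) (c : ℝ) (hc : 0 < c)
    (V : ℝ → S → ℝ)
    (hV : ∀ lam s, V lam s =
      max (R s + γ * ∑ s', P0 s s' * V lam s')
          (R s - lam * c + γ * ∑ s', P1 s s' * V lam s'))
    (s : S) :
    Continuous (fun lam =>
        (R s - lam * c + γ * ∑ s', P1 s s' * V lam s') -
          (R s + γ * ∑ s', P0 s s' * V lam s')) ∧
    Filter.Tendsto (fun lam =>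
        (R s - lam * c + γ * ∑ s', P1 s s' * V lam s') -
          (R s + γ * ∑ s', P0 s s' * V lam s')) Filter.atTop Filter.atBot ∧
    (0 ≤ (R s - 0 * c + γ * ∑ s', P1 s s' * V 0 s') -
          (R s + γ * ∑ s', P0 s s' * V 0 s') →
      ∃ lamstar ≥ (0 : ℝ),
        (R s - lamstar * c + γ * ∑ s', P1 s s' * V lamstar s') =
          (R s + γ * ∑ s', P0 s s' * V lamstar s')) := by
  have hγ' : 0 < 1 - γ := by linarith
  have hVc : ∀ t : S, Continuous (fun lam => V lam t) :=
    fun t => V_cont R P0 P1 γ c V hP0 hP0sum hP1 hP1sum hγ0 hγ1 hc hV t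
  set f : ℝ → ℝ := fun lam =>
      (R s - lam * c + γ * ∑ s', P1 s s' * V lam s') -
        (R s + γ * ∑ s', P0 s s' * V lam s') with hf
  have hsum1 : Continuous (fun lam => ∑ s', P1 s s' * V lam s') :=
    continuous_finset_sum _ fun i _ => continuous_const.mul (hVc i)
  have hsum0 : Continuous (fun lam => ∑ s', P0 s s' * V lam s') :=
    continuous_finset_sum _ fun i _ => continuous_const.mul (hVc i)
  have hcont : Continuous f := by
    refine Continuous.sub ?_ ?_
    · exact ((continuous_const.sub (continuous_id.mul continuous_const)).add
        (continuous_const.mul hsum1))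
    · exact continuous_const.add (continuous_const.mul hsum0)
  set Rmax := Finset.univ.sup' ⟨Classical.arbitrary S, mem_univ _⟩ R with hRmax
  set Rmin := Finset.univ.inf' ⟨Classical.arbitrary S, mem_univ _⟩ R with hRmin
  have hbot : Filter.Tendsto f Filter.atTop Filter.atBot := by
    have hlin : Filter.Tendsto
        (fun lam : ℝ => -(c * lam) + γ * (Rmax / (1 - γ) - Rmin / (1 - γ)))
        Filter.atTop Filter.atBot := by
      apply Filter.tendsto_atBot_add_const_right
      exact Filter.tendsto_neg_atTop_atBot.comp (Filter.tendsto_id.const_mul_atTop hc)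
    refine Filter.tendsto_atBot_mono' _ ?_ hlin
    filter_upwards [Filter.eventually_ge_atTop (0 : ℝ)] with lam hlam
    have hsum1b : (∑ s', P1 s s' * V lam s') ≤ Rmax / (1 - γ) := by
      calc (∑ s', P1 s s' * V lam s')
          ≤ ∑ s', P1 s s' * (Rmax / (1 - γ)) :=
            Finset.sum_le_sum fun i _ => mul_le_mul_of_nonneg_left
              (V_le R P0 P1 γ c V hP0 hP0sum hP1 hP1sum hγ0 hγ1 hc hV lam hlam i)
              (hP1 s i)
        _ = Rmax / (1 - γ) := by rw [← Finset.sum_mul, hP1sum s, one_mul]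
    have hsum0b : Rmin / (1 - γ) ≤ (∑ s', P0 s s' * V lam s') := by
      have h := Finset.sum_le_sum (s := Finset.univ)
        (f := fun s' => P0 s s' * (Rmin / (1 - γ))) (g := fun s' => P0 s s' * V lam s')
        (fun i _ => mul_le_mul_of_nonneg_left
          (V_ge R P0 P1 γ c V hP0 hP0sum hγ0 hγ1 hV lam i) (hP0 s i))
      rwa [← Finset.sum_mul, hP0sum s, one_mul] at h
    have h1 := mul_le_mul_of_nonneg_left hsum1b hγ0
    have h0 := mul_le_mul_of_nonneg_left hsum0b hγ0
    simp only [hf]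
    nlinarith
  refine ⟨hcont, hbot, ?_⟩
  intro h0
  have hf0 : 0 ≤ f 0 := h0
  obtain ⟨b, hb1, hb0⟩ :=
    ((hbot.eventually (Filter.eventually_le_atBot (-1))).and
      (Filter.eventually_ge_atTop (0 : ℝ))).exists
  have hmem : (0 : ℝ) ∈ Set.Icc (f b) (f 0) := ⟨by linarith, hf0⟩
  obtain ⟨lamstar, hls, heq⟩ :=
    intermediate_value_Icc' hb0 hcont.continuousOn hmem
  refine ⟨lamstar, hls.1, ?_⟩
  have : f lamstar = 0 := heq
  simp only [hf] at this
  linarith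
end

section
/- For the multi-action Lagrangian MDP with charge vector λ ∈ ℝ^M, the optimal value V_λ(s) (fixed point of the Bellman operator with rewards r(s,j) − λ_j·c_j for actions j ∈ {1,...,M} and r(s,0) for the passive action) is monotone non-increasing in each coordinate λ_j, and as λ_{j'} → ∞ for all j' ≠ j, V_λ(s) converges to the value of the restricted two-action MDP using only actions {0, j}. -/
private lemma sumP_le {S : Type*} [Fintype S] (P : S → ℝ) (hP : ∀ s', 0 ≤ P s')
    (hsum : ∑ s', P s' = 1) {W W' : S → ℝ} {D : ℝ} (h : ∀ s', W s' ≤ W' s' + D) :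
    ∑ s', P s' * W s' ≤ (∑ s', P s' * W' s') + D := by
  have h1 : ∑ s', P s' * W s' ≤ ∑ s', (P s' * W' s' + P s' * D) :=
    Finset.sum_le_sum fun s' _ => by nlinarith [hP s', h s']
  calc ∑ s', P s' * W s' ≤ ∑ s', (P s' * W' s' + P s' * D) := h1
    _ = (∑ s', P s' * W' s') + (∑ s', P s') * D := by
        rw [Finset.sum_add_distrib, Finset.sum_mul]
    _ = (∑ s', P s' * W' s') + D := by rw [hsum, one_mul]

private lemma contract_le {S : Type*} [Fintype S] [Nonempty S] {γ : ℝ} (hγ0 : 0 ≤ γ)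
    (hγ1 : γ < 1) (W W' : S → ℝ)
    (h : ∀ D : ℝ, (∀ s', W s' ≤ W' s' + D) → ∀ s, W s ≤ W' s + γ * D) :
    ∀ s, W s ≤ W' s := by
  set D := Finset.univ.sup' Finset.univ_nonempty (fun s => W s - W' s) with hDdef
  have hpt : ∀ s', W s' ≤ W' s' + D := by
    intro s'
    have := Finset.le_sup' (fun s => W s - W' s) (Finset.mem_univ s')
    linarith [this]
  obtain ⟨s0, -, hs0⟩ := Finset.exists_mem_eq_sup' (Finset.univ_nonempty (α := S))
    (fun s => W s - W' s)
  have h2 := h D hpt s0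
  have hDeq : D = W s0 - W' s0 := hs0
  have hD0 : D ≤ 0 := by nlinarith
  intro s
  have := hpt s
  nlinarith

private lemma two_branch_le {S : Type*} [Fintype S] [Nonempty S] {γ : ℝ} (hγ0 : 0 ≤ γ)
    (hγ1 : γ < 1) (a b : S → ℝ) (Q0 Q1 : S → S → ℝ)
    (hQ0 : ∀ s s', 0 ≤ Q0 s s') (hs0 : ∀ s, ∑ s', Q0 s s' = 1)
    (hQ1 : ∀ s s', 0 ≤ Q1 s s') (hs1 : ∀ s, ∑ s', Q1 s s' = 1)
    (W W' : S → ℝ)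
    (hW : ∀ s, W s = max (a s + γ * ∑ s', Q0 s s' * W s') (b s + γ * ∑ s', Q1 s s' * W s'))
    (hW' : ∀ s, W' s = max (a s + γ * ∑ s', Q0 s s' * W' s') (b s + γ * ∑ s', Q1 s s' * W' s')) :
    ∀ s, W s ≤ W' s := by
  apply contract_le hγ0 hγ1
  intro D hpt s
  have h0 := sumP_le (Q0 s) (hQ0 s) (hs0 s) hpt
  have h1 := sumP_le (Q1 s) (hQ1 s) (hs1 s) hpt
  have g0 : γ * ∑ s', Q0 s s' * W s' ≤ γ * (∑ s', Q0 s s' * W' s') + γ * D := by nlinarith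
  have g1 : γ * ∑ s', Q1 s s' * W s' ≤ γ * (∑ s', Q1 s s' * W' s') + γ * D := by nlinarith
  rw [hW s, hW' s]
  apply max_le
  · have := le_max_left (a s + γ * ∑ s', Q0 s s' * W' s') (b s + γ * ∑ s', Q1 s s' * W' s')
    linarith
  · have := le_max_right (a s + γ * ∑ s', Q0 s s' * W' s') (b s + γ * ∑ s', Q1 s s' * W' s')
    linarith

theorem multi_action_value_monotone_and_limit
    (S : Type*) [Fintype S] [Nonempty S] (M : ℕ) (hM : 0 < M)
    (R : S → ℝ) (c : Fin M → ℝ) (hc : ∀ j, 0 < c j)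
    (P0 : S → S → ℝ) (P : Fin M → S → S → ℝ)
    (hP0 : ∀ s s', 0 ≤ P0 s s') (hP0sum : ∀ s, ∑ s', P0 s s' = 1)
    (hP : ∀ j s s', 0 ≤ P j s s') (hPsum : ∀ j s, ∑ s', P j s s' = 1)
    (γ : ℝ) (hγ0 : 0 ≤ γ) (hγ1 : γ < 1)
    (V : (Fin M → ℝ) → S → ℝ)
    (hV : ∀ (lam : Fin M → ℝ) (s : S), V lam s =
      max (R s + γ * ∑ s', P0 s s' * V lam s')
        (Finset.univ.sup' (Finset.univ_nonempty_iff.mpr ⟨⟨0, hM⟩⟩)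
          (fun j : Fin M => R s - lam j * c j + γ * ∑ s', P j s s' * V lam s')))
    (Vres : Fin M → ℝ → S → ℝ)
    (hVres : ∀ (j : Fin M) (t : ℝ) (s : S), Vres j t s =
      max (R s + γ * ∑ s', P0 s s' * Vres j t s')
          (R s - t * c j + γ * ∑ s', P j s s' * Vres j t s')) :
    (∀ (s : S) (j : Fin M) (lam : Fin M → ℝ) (t t' : ℝ), t ≤ t' →
      V (Function.update lam j t') s ≤ V (Function.update lam j t) s) ∧
    (∀ (j : Fin M) (s : S) (lamj : ℝ) (ε : ℝ), 0 < ε →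
      ∃ Λ : ℝ, ∀ lam : Fin M → ℝ, lam j = lamj →
        (∀ j' : Fin M, j' ≠ j → Λ ≤ lam j') →
        |V lam s - Vres j lamj s| ≤ ε) := by
  have hne : (Finset.univ : Finset (Fin M)).Nonempty :=
    Finset.univ_nonempty_iff.mpr ⟨⟨0, hM⟩⟩
  constructor
  · -- monotonicity
    intro s j lam t t' htt'
    have hle : ∀ j'', Function.update lam j t j'' ≤ Function.update lam j t' j'' := by
      intro j''
      by_cases h : j'' = j
      · subst h; simp [htt']
      · simp [Function.update_apply, h]
    refine contract_le hγ0 hγ1 (V (Function.update lam j t')) (V (Function.update lam j t))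
      ?_ s
    intro D hpt s'
    rw [hV (Function.update lam j t') s', hV (Function.update lam j t) s']
    apply max_le
    · have h0 := sumP_le (P0 s') (hP0 s') (hP0sum s') hpt
      have g0 : γ * ∑ s'', P0 s' s'' * V (Function.update lam j t') s'' ≤
          γ * (∑ s'', P0 s' s'' * V (Function.update lam j t) s'') + γ * D := by nlinarith
      have := le_max_left (R s' + γ * ∑ s'', P0 s' s'' * V (Function.update lam j t) s'')
        (Finset.univ.sup' hne
          (fun j'' : Fin M => R s' - Function.update lam j t j'' * c j'' +
            γ * ∑ s'', P j'' s' s'' * V (Function.update lam j t) s''))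
      linarith
    · have hsup : Finset.univ.sup' hne
          (fun j'' : Fin M => R s' - Function.update lam j t' j'' * c j'' +
            γ * ∑ s'', P j'' s' s'' * V (Function.update lam j t') s'') ≤
          (Finset.univ.sup' hne
            (fun j'' : Fin M => R s' - Function.update lam j t j'' * c j'' +
              γ * ∑ s'', P j'' s' s'' * V (Function.update lam j t) s'')) + γ * D := by
        apply Finset.sup'_le
        intro j'' _
        have hs := sumP_le (P j'' s') (hP j'' s') (hPsum j'' s') hpt
        have e1 : Function.update lam j t j'' * c j'' ≤
            Function.update lam j t' j'' * c j'' :=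
          mul_le_mul_of_nonneg_right (hle j'') (hc j'').le
        have g1 : γ * ∑ s'', P j'' s' s'' * V (Function.update lam j t') s'' ≤
            γ * (∑ s'', P j'' s' s'' * V (Function.update lam j t) s'') + γ * D := by
          nlinarith
        have hmem := Finset.le_sup' (f := fun j'' : Fin M =>
            R s' - Function.update lam j t j'' * c j'' +
              γ * ∑ s'', P j'' s' s'' * V (Function.update lam j t) s'')
          (Finset.mem_univ j'')
        linarith
      have := le_max_right (R s' + γ * ∑ s'', P0 s' s'' * V (Function.update lam j t) s'')
        (Finset.univ.sup' hne
          (fun j'' : Fin M => R s' - Function.update lam j t j'' * c j'' +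
            γ * ∑ s'', P j'' s' s'' * V (Function.update lam j t) s''))
      linarith
  · -- limit
    intro j s lamj ε hε
    set Rmax := Finset.univ.sup' Finset.univ_nonempty R with hRmaxdef
    set Rmin := Finset.univ.inf' Finset.univ_nonempty R with hRmindef
    set cmin := Finset.univ.inf' hne c with hcmindef
    have hcmin0 : 0 < cmin := by
      obtain ⟨j0, -, hj0⟩ := Finset.exists_mem_eq_inf' hne c
      rw [hcmindef, hj0]; exact hc j0
    have hcminle : ∀ j', cmin ≤ c j' := fun j' => Finset.inf'_le c (Finset.mem_univ j')
    have hRle : ∀ s, R s ≤ Rmax := fun s => Finset.le_sup' R (Finset.mem_univ s)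
    have hRge : ∀ s, Rmin ≤ R s := fun s => Finset.inf'_le R (Finset.mem_univ s)
    have h1γ : 0 < 1 - γ := by linarith
    set B2 := (Rmax + |lamj| * c j) / (1 - γ) with hB2def
    set B1 := Rmin / (1 - γ) with hB1def
    have habs : 0 ≤ |lamj| * c j := mul_nonneg (abs_nonneg _) (hc j).le
    have hB12 : B1 ≤ B2 := by
      rw [hB1def, hB2def, div_le_div_iff₀ h1γ h1γ]
      nlinarith [hRge s, hRle s]
    refine ⟨max 0 (γ * (B2 - B1) / cmin), ?_⟩
    intro lam hlamj hlam'
    -- upper bound on V lam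
    have hub : ∀ s, V lam s ≤ B2 := by
      set Vmax := Finset.univ.sup' Finset.univ_nonempty (V lam) with hVmaxdef
      have hVle : ∀ s, V lam s ≤ Vmax := fun s => Finset.le_sup' (V lam) (Finset.mem_univ s)
      obtain ⟨s1, -, hs1⟩ := Finset.exists_mem_eq_sup' (Finset.univ_nonempty (α := S)) (V lam)
      have hVmeq : Vmax = V lam s1 := hs1
      have key1 : Vmax ≤ Rmax + |lamj| * c j + γ * Vmax := by
        conv_lhs => rw [hVmeq, hV lam s1]
        apply max_le
        · have h' := sumP_le (P0 s1) (hP0 s1) (hP0sum s1) (W' := fun _ => 0) (D := Vmax)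
            (fun s' => by simpa using hVle s')
          simp only [mul_zero, Finset.sum_const_zero, zero_add] at h'
          nlinarith [hRle s1]
        · apply Finset.sup'_le
          intro j'' _
          have hs := sumP_le (P j'' s1) (hP j'' s1) (hPsum j'' s1) (W' := fun _ => 0)
            (D := Vmax) (fun s' => by simpa using hVle s')
          simp only [mul_zero, Finset.sum_const_zero, zero_add] at hs
          have hch : -(lam j'' * c j'') ≤ |lamj| * c j := by
            by_cases hjj : j'' = j
            · subst hjj; rw [hlamj]
              nlinarith [neg_abs_le lamj, (hc j'').le]
            · have h0' : (0:ℝ) ≤ lam j'' :=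
                le_trans (le_max_left 0 (γ * (B2 - B1) / cmin)) (hlam' j'' hjj)
              nlinarith [(hc j'').le]
          nlinarith [hRle s1, mul_le_mul_of_nonneg_left hs hγ0]
      have hVB2 : Vmax ≤ B2 := by
        rw [hB2def, le_div_iff₀ h1γ]; nlinarith
      exact fun s' => le_trans (hVle s') hVB2
    -- lower bound on V lam
    have hlb : ∀ s, B1 ≤ V lam s := by
      set Vmin := Finset.univ.inf' Finset.univ_nonempty (V lam) with hVmindef
      have hVge : ∀ s, Vmin ≤ V lam s := fun s => Finset.inf'_le (V lam) (Finset.mem_univ s)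
      obtain ⟨s2, -, hs2⟩ := Finset.exists_mem_eq_inf' (Finset.univ_nonempty (α := S)) (V lam)
      have hVmeq2 : Vmin = V lam s2 := hs2
      have key2 : Rmin + γ * Vmin ≤ Vmin := by
        conv_rhs => rw [hVmeq2, hV lam s2]
        have hsum2 : Vmin ≤ ∑ s', P0 s2 s' * V lam s' := by
          have h' := sumP_le (P0 s2) (hP0 s2) (hP0sum s2) (W := fun _ => Vmin)
            (W' := V lam) (D := 0) (fun s' => by simpa using hVge s')
          have hconst : ∑ s', P0 s2 s' * Vmin = Vmin := by
            rw [← Finset.sum_mul, hP0sum s2, one_mul]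
          simpa [hconst] using h'
        refine le_trans ?_ (le_max_left _ _)
        nlinarith [hRge s2, mul_le_mul_of_nonneg_left hsum2 hγ0]
      have hVB1 : B1 ≤ Vmin := by
        rw [hB1def, div_le_iff₀ h1γ]; nlinarith
      exact fun s' => le_trans hVB1 (hVge s')
    -- V lam satisfies the restricted two-action equation
    have hkeyB : ∀ s', V lam s' = max (R s' + γ * ∑ s'', P0 s' s'' * V lam s'')
        (R s' - lamj * c j + γ * ∑ s'', P j s' s'' * V lam s'') := by
      intro s'
      rw [hV lam s']
      have hfj : R s' - lamj * c j + γ * ∑ s'', P j s' s'' * V lam s'' ≤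
          Finset.univ.sup' hne
            (fun j'' : Fin M => R s' - lam j'' * c j'' + γ * ∑ s'', P j'' s' s'' * V lam s'') := by
        have h' := Finset.le_sup' (f := fun j'' : Fin M =>
            R s' - lam j'' * c j'' + γ * ∑ s'', P j'' s' s'' * V lam s'')
          (Finset.mem_univ j)
        rwa [hlamj] at h'
      have hsup : Finset.univ.sup' hne
          (fun j'' : Fin M => R s' - lam j'' * c j'' + γ * ∑ s'', P j'' s' s'' * V lam s'') ≤
          max (R s' + γ * ∑ s'', P0 s' s'' * V lam s'')
            (R s' - lamj * c j + γ * ∑ s'', P j s' s'' * V lam s'') := by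
        apply Finset.sup'_le
        intro j'' _
        by_cases hjj : j'' = j
        · subst hjj
          rw [hlamj]
          exact le_max_right _ _
        · refine le_trans ?_ (le_max_left _ _)
          have hb2 : ∑ s'', P j'' s' s'' * V lam s'' ≤ B2 := by
            have h' := sumP_le (P j'' s') (hP j'' s') (hPsum j'' s') (W' := fun _ => 0)
              (D := B2) (fun t => by simpa using hub t)
            simpa using h'
          have hb1 : B1 ≤ ∑ s'', P0 s' s'' * V lam s'' := by
            have h' := sumP_le (P0 s') (hP0 s') (hP0sum s') (W := fun _ => B1)
              (W' := V lam) (D := 0) (fun t => by simpa using hlb t)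
            have hconst : ∑ s'', P0 s' s'' * B1 = B1 := by
              rw [← Finset.sum_mul, hP0sum s', one_mul]
            simpa [hconst] using h'
          have hΛ : γ * (B2 - B1) ≤ lam j'' * c j'' := by
            have hl := hlam' j'' hjj
            have hq : γ * (B2 - B1) / cmin ≤ lam j'' :=
              le_trans (le_max_right 0 _) hl
            have h0l : (0:ℝ) ≤ lam j'' := le_trans (le_max_left 0 _) hl
            calc γ * (B2 - B1) = (γ * (B2 - B1) / cmin) * cmin := by
                  field_simp
              _ ≤ lam j'' * cmin := mul_le_mul_of_nonneg_right hq hcmin0.le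
              _ ≤ lam j'' * c j'' := mul_le_mul_of_nonneg_left (hcminle j'') h0l
          nlinarith [mul_le_mul_of_nonneg_left hb2 hγ0, mul_le_mul_of_nonneg_left hb1 hγ0]
      exact le_antisymm (max_le (le_max_left _ _) hsup)
        (max_le (le_max_left _ _) (le_trans hfj (le_max_right _ _)))
    have hle1 := two_branch_le hγ0 hγ1 R (fun s' => R s' - lamj * c j) P0 (P j)
      hP0 hP0sum (hP j) (hPsum j) (V lam) (Vres j lamj) hkeyB (hVres j lamj)
    have hle2 := two_branch_le hγ0 hγ1 R (fun s' => R s' - lamj * c j) P0 (P j)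
      hP0 hP0sum (hP j) (hPsum j) (Vres j lamj) (V lam) (hVres j lamj) hkeyB
    have heq : V lam s = Vres j lamj s := le_antisymm (hle1 s) (hle2 s)
    rw [heq]
    simpa using hε.le
end
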